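/- (Monotone modified Newton step.) Suppose x ∈ ℝⁿ satisfies F(x) ≤ 0 entrywise, 0 ≤ x entrywise, and eᵀx ≤ 1. Then for any z ∈ ℝⁿ with 0 ≤ z ≤ x entrywise, F'_z is invertible, and the vector y = x − (F'_z)⁻¹F(x) satisfies: (a) F(y) ≤ 0 entrywise; (b) 0 ≤ x ≤ y entrywise and eᵀy ≤ 1. -/

import Mathlib

open Matrix BigOperators Finset Filter

noncomputable section

/-- Kronecker product of two vectors: `(u ⊗ w)_{(i,j)} = u_i w_j`. -/
def kron {n : ℕ} (u w : Fin n → ℝ) : Fin n × Fin n → ℝ := fun p => u p.1 * w p.2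

/-- `u ⊗ I` : the `n² × n` Kronecker product of a vector with the identity,
so that `(u ⊗ I) w = u ⊗ w`. -/
def kronVecId {n : ℕ} (u : Fin n → ℝ) : Matrix (Fin n × Fin n) (Fin n) ℝ :=
  Matrix.of fun p k => u p.1 * (if p.2 = k then (1 : ℝ) else 0)

/-- `I ⊗ u` : the `n² × n` Kronecker product of the identity with a vector,
so that `(I ⊗ u) w = w ⊗ u`. -/
def idKronVec {n : ℕ} (u : Fin n → ℝ) : Matrix (Fin n × Fin n) (Fin n) ℝ :=
  Matrix.of fun p k => (if p.1 = k then (1 : ℝ) else 0) * u p.2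

/-- `F(x) = x − α R (x ⊗ x) − (1 − α) v`. -/
def Fmap {n : ℕ} (α : ℝ) (R : Matrix (Fin n) (Fin n × Fin n) ℝ) (v : Fin n → ℝ)
    (x : Fin n → ℝ) : Fin n → ℝ :=
  x - α • R.mulVec (kron x x) - (1 - α) • v

/-- `F'ₓ = I − α R (x ⊗ I + I ⊗ x)`. -/
def Fprime {n : ℕ} (α : ℝ) (R : Matrix (Fin n) (Fin n × Fin n) ℝ)
    (x : Fin n → ℝ) : Matrix (Fin n) (Fin n) ℝ :=
  1 - α • (R * (kronVecId x + idKronVec x))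

/-!
Write `F'_z = I - M` with `M = α R (z ⊗ I + I ⊗ z)`: `M` is entrywise nonnegative and every column
sum of `M` equals `2α eᵀz < 1`. Such an `I - M` is monotone (`(I - M) d ≥ 0 ⇒ d ≥ 0`): the
negative part `m = min(d, 0)` satisfies `M m ≤ m`, and summing gives `(1 - 2α eᵀz) eᵀm ≥ 0`, so
`m = 0`. Hence `F'_z` is invertible and the step `d = y - x = -(F'_z)⁻¹ F(x)` is nonnegative.
Since `F` is quadratic, `F(y) = F(x) + F'_z d - α R ((x - z) ⊗ d + d ⊗ (x - z) + d ⊗ d)`, whose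
first two terms cancel, so `F(y) ≤ 0`. Summing the Newton equation `F'_z d = -F(x)` against the
column-stochastic `R` gives `(1 - eᵀy)(1 - 2α eᵀz) = α (1 - eᵀx)(1 + eᵀx - 2 eᵀz) ≥ 0`.
-/

theorem nonneg_of_one_sub_mulVec_nonneg {ι : Type*} [Fintype ι] [DecidableEq ι]
    {M : Matrix ι ι ℝ} (hM : ∀ i j, 0 ≤ M i j) {c : ℝ} (hc : c < 1)
    (hcol : ∀ j, ∑ i, M i j ≤ c) {d : ι → ℝ} (hd : 0 ≤ (1 - M) *ᵥ d) : 0 ≤ d := by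
  set m : ι → ℝ := fun i => min (d i) 0
  have hm : ∀ i, m i ≤ 0 := fun i => min_le_right _ _
  have hMm : ∀ i, (M *ᵥ m) i ≤ m i := by
    intro i
    have hmd : (M *ᵥ m) i ≤ (M *ᵥ d) i :=
      dotProduct_le_dotProduct_of_nonneg_left (fun j => min_le_left _ _) (hM i)
    have hm0 : (M *ᵥ m) i ≤ 0 :=
      Finset.sum_nonpos fun j _ => mul_nonpos_of_nonneg_of_nonpos (hM i j) (hm j)
    have hdi : (M *ᵥ d) i ≤ d i := by simpa [sub_mulVec] using hd i
    exact le_min (hmd.trans hdi) hm0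
  have hsum : c * ∑ i, m i ≤ ∑ i, m i := calc
    c * ∑ j, m j ≤ ∑ j, (∑ i, M i j) * m j := by
      rw [Finset.mul_sum]
      exact Finset.sum_le_sum fun j _ => mul_le_mul_of_nonpos_right (hcol j) (hm j)
    _ = ∑ i, (M *ᵥ m) i := by
      simp only [mulVec, dotProduct, Finset.sum_mul]
      exact Finset.sum_comm
    _ ≤ ∑ i, m i := Finset.sum_le_sum fun i _ => hMm i
  have hm_sum_nonpos : ∑ i, m i ≤ 0 := Finset.sum_nonpos fun i _ => hm i
  have hm_sum : ∑ i, m i = 0 := le_antisymm hm_sum_nonpos (by nlinarith)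
  intro i
  have hmi : m i = 0 :=
    (Finset.sum_eq_zero_iff_of_nonpos fun i _ => hm i).mp hm_sum i (Finset.mem_univ i)
  exact min_eq_right_iff.mp hmi

theorem isUnit_one_sub_of_colsum_lt_one {ι : Type*} [Fintype ι] [DecidableEq ι]
    {M : Matrix ι ι ℝ} (hM : ∀ i j, 0 ≤ M i j) {c : ℝ} (hc : c < 1)
    (hcol : ∀ j, ∑ i, M i j ≤ c) : IsUnit (1 - M) := by
  refine mulVec_injective_iff_isUnit.mp fun d₁ d₂ h => ?_
  have h₁₂ : (1 - M) *ᵥ (d₁ - d₂) = 0 := by rw [mulVec_sub, h, sub_self]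
  have h₂₁ : (1 - M) *ᵥ (d₂ - d₁) = 0 := by rw [mulVec_sub, h, sub_self]
  exact le_antisymm
    (sub_nonneg.mp (nonneg_of_one_sub_mulVec_nonneg hM hc hcol h₂₁.symm.le))
    (sub_nonneg.mp (nonneg_of_one_sub_mulVec_nonneg hM hc hcol h₁₂.symm.le))

section Kronecker

variable {n : ℕ}

theorem kron_nonneg {u w : Fin n → ℝ} (hu : 0 ≤ u) (hw : 0 ≤ w) : 0 ≤ kron u w :=
  fun p => mul_nonneg (hu p.1) (hw p.2)

theorem sum_kron (u w : Fin n → ℝ) : ∑ p, kron u w p = (∑ i, u i) * ∑ i, w i := by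
  rw [Fintype.sum_mul_sum, Fintype.sum_prod_type]
  rfl

theorem kron_add_add (u u' w w' : Fin n → ℝ) :
    kron (u + u') (w + w') = kron u w + kron u w' + kron u' w + kron u' w' := by
  ext p
  simp only [kron, Pi.add_apply]
  ring

theorem kron_sub_left (u u' w : Fin n → ℝ) : kron (u - u') w = kron u w - kron u' w := by
  ext p
  simp only [kron, Pi.sub_apply]
  ring

theorem kron_sub_right (u w w' : Fin n → ℝ) : kron u (w - w') = kron u w - kron u w' := by
  ext p
  simp only [kron, Pi.sub_apply]
  ring

theorem kronVecId_mulVec (u w : Fin n → ℝ) : kronVecId u *ᵥ w = kron u w := by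
  ext p
  simp [kronVecId, kron, mulVec, dotProduct]

theorem idKronVec_mulVec (u w : Fin n → ℝ) : idKronVec u *ᵥ w = kron w u := by
  ext p
  simp [idKronVec, kron, mulVec, dotProduct, mul_comm]

theorem sum_mulVec_of_sum_col_eq_one {m ι : Type*} [Fintype m] [Fintype ι]
    {R : Matrix m ι ℝ} (hRcol : ∀ p, ∑ i, R i p = 1) (u : ι → ℝ) :
    ∑ i, (R *ᵥ u) i = ∑ p, u p := by
  simp only [mulVec, dotProduct]
  rw [Finset.sum_comm]
  simp [← Finset.sum_mul, hRcol]

end Kronecker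

section NewtonStep

variable {n : ℕ} (α : ℝ) (R : Matrix (Fin n) (Fin n × Fin n) ℝ)

def quadJac (z : Fin n → ℝ) : Matrix (Fin n) (Fin n) ℝ :=
  α • (R * (kronVecId z + idKronVec z))

theorem Fprime_eq_one_sub_quadJac (z : Fin n → ℝ) : Fprime α R z = 1 - quadJac α R z := rfl

theorem quadJac_mulVec (z d : Fin n → ℝ) :
    quadJac α R z *ᵥ d = α • R *ᵥ (kron z d + kron d z) := by
  rw [quadJac, smul_mulVec, ← mulVec_mulVec, add_mulVec, kronVecId_mulVec, idKronVec_mulVec]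

variable {α R}

theorem quadJac_nonneg (hα : 0 ≤ α) (hR : ∀ i p, 0 ≤ R i p) {z : Fin n → ℝ} (hz : 0 ≤ z)
    (i j : Fin n) : 0 ≤ quadJac α R z i j := by
  have hej : (0 : Fin n → ℝ) ≤ Pi.single j 1 := Pi.single_nonneg.mpr zero_le_one
  have hcol := congrFun (quadJac_mulVec α R z (Pi.single j 1)) i
  rw [mulVec_single_one] at hcol
  change 0 ≤ col (quadJac α R z) j i
  rw [hcol]
  exact mul_nonneg hα (dotProduct_nonneg_of_nonneg (hR i)
    (add_nonneg (kron_nonneg hz hej) (kron_nonneg hej hz)))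

theorem sum_quadJac_mulVec (hRcol : ∀ p, ∑ i, R i p = 1) (z d : Fin n → ℝ) :
    ∑ i, (quadJac α R z *ᵥ d) i = 2 * α * (∑ i, z i) * ∑ i, d i := by
  rw [quadJac_mulVec]
  simp only [Pi.smul_apply, smul_eq_mul, ← Finset.mul_sum, sum_mulVec_of_sum_col_eq_one hRcol,
    Pi.add_apply, Finset.sum_add_distrib, sum_kron]
  ring

theorem sum_quadJac_col (hRcol : ∀ p, ∑ i, R i p = 1) (z : Fin n → ℝ) (k : Fin n) :
    ∑ i, quadJac α R z i k = 2 * α * ∑ i, z i := by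
  have h := sum_quadJac_mulVec (α := α) hRcol z (Pi.single k 1)
  rwa [mulVec_single_one, Finset.sum_pi_single', if_pos (Finset.mem_univ k), mul_one] at h

theorem sum_Fprime_mulVec (hRcol : ∀ p, ∑ i, R i p = 1) (z d : Fin n → ℝ) :
    ∑ i, (Fprime α R z *ᵥ d) i = (1 - 2 * α * ∑ i, z i) * ∑ i, d i := by
  rw [Fprime_eq_one_sub_quadJac, sub_mulVec, one_mulVec]
  simp only [Pi.sub_apply, Finset.sum_sub_distrib, sum_quadJac_mulVec hRcol]
  ring

theorem sum_Fmap (hRcol : ∀ p, ∑ i, R i p = 1) {v : Fin n → ℝ} (hv1 : ∑ i, v i = 1)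
    (x : Fin n → ℝ) :
    ∑ i, Fmap α R v x i = ∑ i, x i - α * (∑ i, x i) ^ 2 - (1 - α) := by
  simp only [Fmap, Pi.sub_apply, Pi.smul_apply, smul_eq_mul, Finset.sum_sub_distrib,
    ← Finset.mul_sum, sum_mulVec_of_sum_col_eq_one hRcol, sum_kron, hv1]
  ring

theorem Fmap_add (v x z d : Fin n → ℝ) :
    Fmap α R v (x + d) = Fmap α R v x + Fprime α R z *ᵥ d
      - α • R *ᵥ (kron (x - z) d + kron d (x - z) + kron d d) := by
  rw [Fmap, Fmap, Fprime_eq_one_sub_quadJac, sub_mulVec, one_mulVec, quadJac_mulVec,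
    kron_add_add, kron_sub_left, kron_sub_right]
  simp only [mulVec_add, mulVec_sub, smul_add, smul_sub]
  abel

end NewtonStep

theorem stmt12_general {n : ℕ} (α : ℝ) (hα0 : 0 < α) (hα : α < 1 / 2)
    (R : Matrix (Fin n) (Fin n × Fin n) ℝ) (hR0 : ∀ i p, 0 ≤ R i p)
    (hRcol : ∀ p, ∑ i, R i p = 1)
    (v : Fin n → ℝ) (hv1 : ∑ i, v i = 1)
    (x : Fin n → ℝ) (hFx : Fmap α R v x ≤ 0) (hx0 : 0 ≤ x) (hx1 : ∑ i, x i ≤ 1)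
    (z : Fin n → ℝ) (hz0 : 0 ≤ z) (hzx : z ≤ x)
    (y : Fin n → ℝ) (hy : y = x - (Fprime α R z)⁻¹.mulVec (Fmap α R v x)) :
    IsUnit (Fprime α R z) ∧
    Fmap α R v y ≤ 0 ∧ 0 ≤ x ∧ x ≤ y ∧ ∑ i, y i ≤ 1 := by
  set σ := ∑ i, x i
  set ζ := ∑ i, z i
  have hζσ : ζ ≤ σ := Finset.sum_le_sum fun i _ => hzx i
  have hζ0 : 0 ≤ ζ := Finset.sum_nonneg fun i _ => hz0 i
  have hc : 2 * α * ζ < 1 := by nlinarith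
  have hM0 := quadJac_nonneg hα0.le hR0 hz0
  have hcol i := (sum_quadJac_col (α := α) hRcol z i).le
  have hunit : IsUnit (Fprime α R z) := isUnit_one_sub_of_colsum_lt_one hM0 hc hcol
  set d := (Fprime α R z)⁻¹ *ᵥ -Fmap α R v x
  have hAd : Fprime α R z *ᵥ d = -Fmap α R v x := by
    rw [mulVec_mulVec, mul_nonsing_inv _ ((isUnit_iff_isUnit_det _).mp hunit), one_mulVec]
  have hd0 : 0 ≤ d := nonneg_of_one_sub_mulVec_nonneg hM0 hc hcol (hAd ▸ neg_nonneg.mpr hFx)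
  have hyd : y = x + d := by rw [hy, sub_eq_add_neg, ← mulVec_neg]
  have hxz : 0 ≤ x - z := sub_nonneg.mpr hzx
  have hFy : Fmap α R v y = -(α • R *ᵥ (kron (x - z) d + kron d (x - z) + kron d d)) := by
    rw [hyd, Fmap_add v x z d, hAd]
    abel
  have hsum : (1 - 2 * α * ζ) * ∑ i, d i = -(σ - α * σ ^ 2 - (1 - α)) := by
    rw [← sum_Fprime_mulVec hRcol, hAd, ← sum_Fmap hRcol hv1, ← Finset.sum_neg_distrib]
    rfl
  refine ⟨hunit, ?_, hx0, hyd ▸ le_add_of_nonneg_right hd0, ?_⟩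
  · rw [hFy, neg_nonpos]
    exact smul_nonneg hα0.le fun i => dotProduct_nonneg_of_nonneg (hR0 i)
      (add_nonneg (add_nonneg (kron_nonneg hxz hd0) (kron_nonneg hd0 hxz)) (kron_nonneg hd0 hd0))
  · have hsumy : ∑ i, y i = σ + ∑ i, d i := by rw [hyd, ← Finset.sum_add_distrib]; rfl
    have hkey : (1 - ∑ i, y i) * (1 - 2 * α * ζ) = α * (1 - σ) * (1 + σ - 2 * ζ) := by
      rw [hsumy]; linear_combination -hsum
    have hrhs : 0 ≤ α * (1 - σ) * (1 + σ - 2 * ζ) :=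
      mul_nonneg (mul_nonneg hα0.le (by linarith)) (by linarith)
    have := nonneg_of_mul_nonneg_left (hkey ▸ hrhs) (by linarith)
    linarith

theorem stmt12 {n : ℕ} (hn : 1 ≤ n) (α : ℝ) (hα0 : 0 < α) (hα : α < 1 / 2)
    (R : Matrix (Fin n) (Fin n × Fin n) ℝ) (hR0 : ∀ i p, 0 ≤ R i p)
    (hRcol : ∀ p, ∑ i, R i p = 1)
    (v : Fin n → ℝ) (hv0 : 0 ≤ v) (hv1 : ∑ i, v i = 1)
    (x : Fin n → ℝ) (hFx : Fmap α R v x ≤ 0) (hx0 : 0 ≤ x) (hx1 : ∑ i, x i ≤ 1)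
    (z : Fin n → ℝ) (hz0 : 0 ≤ z) (hzx : z ≤ x)
    (y : Fin n → ℝ) (hy : y = x - (Fprime α R z)⁻¹.mulVec (Fmap α R v x)) :
    IsUnit (Fprime α R z) ∧
    Fmap α R v y ≤ 0 ∧ 0 ≤ x ∧ x ≤ y ∧ ∑ i, y i ≤ 1 :=
  stmt12_general α hα0 hα R hR0 hRcol v hv1 x hFx hx0 hx1 z hz0 hzx y hy
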